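/- arXiv:2001.07485 — 5 statements merged into one kernel-verified Lean document; each statement's English description precedes it below -/
import Mathlib

section
/- For every integer k ≥ 1, the differential entropy of the chi-squared distribution with 2k degrees of freedom satisfies −∫₀^∞ p_k(t) log p_k(t) dt ≥ (1/2) log(8πk). -/
/-!
The chi-squared law with `2k` degrees of freedom is the Gamma law of shape `k` and rate `1/2`.
For the Gamma density `f` of shape `a ≥ 1` and rate `r`, `log f` is affine in `log t` and `t`, so
its entropy is `a - a log r + log Γ(a) - (a - 1) E[log t]`; Jensen's inequality
`E[log t] ≤ log E[t] = log (a / r)` bounds it below by `a - (a - 1) log a - log r + log Γ(a)`.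
For `a = k`, `r = 1/2`, Stirling's lower bound for `log Γ(k) = log k! - log k` turns this into
`(1/2) log (8 π k)`.
-/

open MeasureTheory Real Set

/-- Probability density of the chi-squared distribution with `2k` degrees of freedom. -/
noncomputable def chiSqPDF (k : ℕ) (t : ℝ) : ℝ :=
  t ^ (k - 1) * Real.exp (-t / 2) / (2 ^ k * Real.Gamma k)

open ProbabilityTheory

section GammaIntegrals

variable {a r : ℝ}

lemma integrableOn_rpow_mul_exp_neg_mul_Ioi (ha : 0 < a) (hr : 0 < r) :
    IntegrableOn (fun t : ℝ => t ^ (a - 1) * exp (-(r * t))) (Ioi 0) :=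
  Integrable.of_integral_ne_zero <| by
    rw [integral_rpow_mul_exp_neg_mul_Ioi ha hr]; positivity

lemma abs_log_le_rpow_add_rpow_neg_div {t ε : ℝ} (ht : 0 < t) (hε : 0 < ε) :
    |log t| ≤ (t ^ ε + t ^ (-ε)) / ε := by
  have hpos := log_le_rpow_div ht.le hε
  have hneg := log_le_rpow_div (inv_pos.2 ht).le hε
  rw [log_inv, inv_rpow ht.le, ← rpow_neg ht.le] at hneg
  rw [abs_le, add_div]
  constructor <;> linarith [div_nonneg (rpow_pos_of_pos ht ε).le hε.le,
    div_nonneg (rpow_pos_of_pos ht (-ε)).le hε.le]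

lemma integrableOn_rpow_mul_exp_neg_mul_mul_log_Ioi (ha : 0 < a) (hr : 0 < r) :
    IntegrableOn (fun t : ℝ => t ^ (a - 1) * exp (-(r * t)) * log t) (Ioi 0) := by
  set ε := a / 2
  have hε : 0 < ε := by positivity
  -- `|log t| ≤ (t ^ ε + t ^ (-ε)) / ε` trades the logarithm for two shifts of the exponent
  have hdom : IntegrableOn (fun t : ℝ =>
      (t ^ (a + ε - 1) * exp (-(r * t)) + t ^ (a - ε - 1) * exp (-(r * t))) / ε) (Ioi 0) :=
    ((integrableOn_rpow_mul_exp_neg_mul_Ioi (by positivity) hr).add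
      (integrableOn_rpow_mul_exp_neg_mul_Ioi (by simp only [ε]; linarith) hr)).div_const ε
  refine hdom.mono' (by fun_prop) ((ae_restrict_iff' measurableSet_Ioi).2 <|
    ae_of_all _ fun t (ht : 0 < t) => ?_)
  rw [norm_mul, norm_of_nonneg (by positivity)]
  calc t ^ (a - 1) * exp (-(r * t)) * ‖log t‖
      ≤ t ^ (a - 1) * exp (-(r * t)) * ((t ^ ε + t ^ (-ε)) / ε) :=
        mul_le_mul_of_nonneg_left (abs_log_le_rpow_add_rpow_neg_div ht hε) (by positivity)
    _ = _ := by
        rw [sub_eq_add_neg a ε, add_sub_right_comm, add_sub_right_comm a (-ε),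
          rpow_add ht, rpow_add ht]
        ring

end GammaIntegrals

section GammaPDF

variable {a r : ℝ}

lemma gammaPDFReal_of_pos {t : ℝ} (ht : 0 < t) :
    gammaPDFReal a r t = r ^ a / Gamma a * (t ^ (a - 1) * exp (-(r * t))) := by
  rw [gammaPDFReal, if_pos ht.le, mul_assoc]

lemma log_gammaPDFReal (ha : 0 < a) (hr : 0 < r) {t : ℝ} (ht : 0 < t) :
    log (gammaPDFReal a r t) = a * log r - log (Gamma a) + (a - 1) * log t - r * t := by
  rw [gammaPDFReal_of_pos ht, log_mul (by positivity) (by positivity),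
    log_mul (by positivity) (by positivity), log_div (by positivity) (Gamma_pos_of_pos ha).ne',
    log_rpow hr, log_rpow ht, log_exp]
  ring

lemma integrableOn_gammaPDFReal_Ioi (ha : 0 < a) (hr : 0 < r) :
    IntegrableOn (gammaPDFReal a r) (Ioi 0) :=
  IntegrableOn.congr_fun ((integrableOn_rpow_mul_exp_neg_mul_Ioi ha hr).const_mul _)
    (fun _ ht => (gammaPDFReal_of_pos ht).symm) measurableSet_Ioi

lemma integral_gammaPDFReal_Ioi (ha : 0 < a) (hr : 0 < r) :
    ∫ t in Ioi 0, gammaPDFReal a r t = 1 := by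
  rw [setIntegral_congr_fun measurableSet_Ioi fun _ ht => gammaPDFReal_of_pos ht,
    integral_const_mul, integral_rpow_mul_exp_neg_mul_Ioi ha hr, one_div, inv_rpow hr.le]
  field_simp [(Gamma_pos_of_pos ha).ne', (rpow_pos_of_pos hr a).ne']

lemma gammaPDFReal_mul_self_of_pos {t : ℝ} (ht : 0 < t) :
    t * gammaPDFReal a r t = r ^ a / Gamma a * (t ^ (a + 1 - 1) * exp (-(r * t))) := by
  rw [gammaPDFReal_of_pos ht, add_sub_right_comm, rpow_add_one ht.ne']
  ring

lemma integrableOn_mul_gammaPDFReal_Ioi (ha : 0 < a) (hr : 0 < r) :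
    IntegrableOn (fun t => t * gammaPDFReal a r t) (Ioi 0) :=
  IntegrableOn.congr_fun
    ((integrableOn_rpow_mul_exp_neg_mul_Ioi (by positivity) hr).const_mul _)
    (fun _ ht => (gammaPDFReal_mul_self_of_pos ht).symm) measurableSet_Ioi

lemma integral_mul_gammaPDFReal_Ioi (ha : 0 < a) (hr : 0 < r) :
    ∫ t in Ioi 0, t * gammaPDFReal a r t = a / r := by
  rw [setIntegral_congr_fun measurableSet_Ioi fun _ ht => gammaPDFReal_mul_self_of_pos ht,
    integral_const_mul, integral_rpow_mul_exp_neg_mul_Ioi (by positivity) hr,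
    Gamma_add_one ha.ne', one_div, inv_rpow hr.le, rpow_add_one hr.ne']
  field_simp [(Gamma_pos_of_pos ha).ne', (rpow_pos_of_pos hr a).ne']

lemma integrableOn_gammaPDFReal_mul_log_Ioi (ha : 0 < a) (hr : 0 < r) :
    IntegrableOn (fun t => gammaPDFReal a r t * log t) (Ioi 0) :=
  IntegrableOn.congr_fun
    ((integrableOn_rpow_mul_exp_neg_mul_mul_log_Ioi ha hr).const_mul (r ^ a / Gamma a))
    (fun _ ht => by rw [gammaPDFReal_of_pos ht]; ring) measurableSet_Ioi

end GammaPDF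

lemma setIntegral_mul_log_le_log_setIntegral_mul {f : ℝ → ℝ}
    (hf_nonneg : ∀ t ∈ Ioi (0 : ℝ), 0 ≤ f t)
    (hf : IntegrableOn f (Ioi 0)) (htf : IntegrableOn (fun t => t * f t) (Ioi 0))
    (hf_log : IntegrableOn (fun t => f t * log t) (Ioi 0)) (hf_one : ∫ t in Ioi 0, f t = 1)
    (hmean : 0 < ∫ t in Ioi 0, t * f t) :
    ∫ t in Ioi 0, f t * log t ≤ log (∫ t in Ioi 0, t * f t) := by
  set m := ∫ t in Ioi 0, t * f t
  have htangent :
      ∀ t ∈ Ioi (0 : ℝ), f t * log t ≤ (log m - 1) * f t + m⁻¹ * (t * f t) := by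
    intro t (ht : 0 < t)
    have h := log_le_sub_one_of_pos (div_pos ht hmean)
    rw [log_div ht.ne' hmean.ne'] at h
    have := mul_le_mul_of_nonneg_left h (hf_nonneg t ht)
    rw [div_eq_inv_mul] at this
    linarith
  calc ∫ t in Ioi 0, f t * log t
      ≤ ∫ t in Ioi 0, (log m - 1) * f t + m⁻¹ * (t * f t) :=
        setIntegral_mono_on hf_log ((hf.const_mul _).add (htf.const_mul _)) measurableSet_Ioi
          htangent
    _ = log m := by
        rw [integral_add (hf.const_mul _) (htf.const_mul _), integral_const_mul,
          integral_const_mul, hf_one, inv_mul_cancel₀ hmean.ne']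
        ring

theorem le_neg_setIntegral_gammaPDFReal_mul_log {a r : ℝ} (ha : 1 ≤ a) (hr : 0 < r) :
    a - (a - 1) * log a - log r + log (Gamma a) ≤
      -∫ t in Ioi 0, gammaPDFReal a r t * log (gammaPDFReal a r t) := by
  have ha₀ : 0 < a := by linarith
  have hf := integrableOn_gammaPDFReal_Ioi ha₀ hr
  have htf := integrableOn_mul_gammaPDFReal_Ioi ha₀ hr
  have hf_log := integrableOn_gammaPDFReal_mul_log_Ioi ha₀ hr
  have hmean := integral_mul_gammaPDFReal_Ioi ha₀ hr
  have hjensen := setIntegral_mul_log_le_log_setIntegral_mul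
    (fun t _ => gammaPDFReal_nonneg ha₀ hr t) hf htf hf_log (integral_gammaPDFReal_Ioi ha₀ hr)
    (by rw [hmean]; positivity)
  have hentropy : ∫ t in Ioi 0, gammaPDFReal a r t * log (gammaPDFReal a r t) =
      a * log r - log (Gamma a) + (a - 1) * (∫ t in Ioi 0, gammaPDFReal a r t * log t) - a := by
    rw [setIntegral_congr_fun measurableSet_Ioi (g := fun t =>
        (a * log r - log (Gamma a)) * gammaPDFReal a r t + (a - 1) * (gammaPDFReal a r t * log t)
          - r * (t * gammaPDFReal a r t))
        fun t ht => by rw [log_gammaPDFReal ha₀ hr ht]; ring,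
      integral_sub ((hf.const_mul _).fun_add (hf_log.const_mul _)) (htf.const_mul _),
      integral_add (hf.const_mul _) (hf_log.const_mul _), integral_const_mul, integral_const_mul,
      integral_const_mul, integral_gammaPDFReal_Ioi ha₀ hr, hmean, mul_div_cancel₀ _ hr.ne']
    ring
  rw [hmean, log_div ha₀.ne' hr.ne'] at hjensen
  rw [hentropy]
  linarith [mul_le_mul_of_nonneg_left hjensen (sub_nonneg.2 ha)]

lemma chiSqPDF_eq_gammaPDFReal {k : ℕ} (hk : 1 ≤ k) {t : ℝ} (ht : 0 < t) :
    chiSqPDF k t = gammaPDFReal k (1 / 2) t := by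
  have hexp : (k : ℝ) - 1 = ((k - 1 : ℕ) : ℝ) := by rw [Nat.cast_sub hk, Nat.cast_one]
  rw [chiSqPDF, gammaPDFReal_of_pos ht, hexp, rpow_natCast, rpow_natCast, neg_div,
    div_eq_inv_mul t, one_div, inv_pow]
  ring

lemma le_log_Gamma_nat_stirling {k : ℕ} (hk : k ≠ 0) :
    (k - 1 / 2) * log k - k + log (2 * π) / 2 ≤ log (Gamma k) := by
  have hfac : log (k.factorial : ℝ) = log k + log (Gamma k) := by
    have hk₀ : (0 : ℝ) < k := Nat.cast_pos.2 (Nat.pos_of_ne_zero hk)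
    rw [← Gamma_nat_eq_factorial, Gamma_add_one hk₀.ne',
      log_mul hk₀.ne' (Gamma_pos_of_pos hk₀).ne']
  linarith [Stirling.le_log_factorial_stirling hk]

/-- The differential entropy of the chi-squared distribution with `2k` degrees of freedom
is at least `(1/2) log (8 π k)`. -/
theorem chiSq_entropy_lower_bound (k : ℕ) (hk : 1 ≤ k) :
    (1 / 2 : ℝ) * Real.log (8 * Real.pi * k) ≤
      -∫ t in Ioi (0 : ℝ), chiSqPDF k t * Real.log (chiSqPDF k t) := by
  have hk₀ : (0 : ℝ) < k := by exact_mod_cast hk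
  rw [setIntegral_congr_fun measurableSet_Ioi fun t ht => by
    rw [chiSqPDF_eq_gammaPDFReal hk ht]]
  refine le_trans ?_ (le_neg_setIntegral_gammaPDFReal_mul_log (by exact_mod_cast hk) one_half_pos)
  have hstirling := le_log_Gamma_nat_stirling (Nat.one_le_iff_ne_zero.1 hk)
  rw [show (8 : ℝ) * π * k = 2 * (2 * π) * (2 * k) by ring,
    log_mul (by positivity) (by positivity), log_mul (by positivity) (by positivity),
    log_mul two_ne_zero hk₀.ne', one_div, log_inv]
  linarith
end

section
/- Let E > 0 and c > 0 be real numbers, and let (J_n)_{n≥0} be any sequence of nonnegative reals satisfying J_{n+1} = E + c − c²/(J_n + c) for all n ≥ 0. Then J_n converges, as n → ∞, to the stationary solution J* = E/2 + (1/2)√(E² + 4cE), independently of the starting condition J₀ ≥ 0. -/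
/-!
The map `f x = E + c - c² / (x + c)` sends `[0, ∞)` into `[E, ∞)` and fixes `J*`, the positive
root of `J² = E J + E c`. Since `f x - f y = c² (x - y) / ((x + c) (y + c))`, it is a contraction
of `[E, ∞)` with constant `(c / (E + c))² < 1`, so from the first step on the distance of `J n`
to `J*` decays geometrically.
-/

open Filter Topology

theorem tendsto_of_dist_succ_le_mul {α : Type*} [PseudoMetricSpace α] {u : ℕ → α} {a : α}
    {q : ℝ} (hq₀ : 0 ≤ q) (hq₁ : q < 1) (h : ∀ n, dist (u (n + 1)) a ≤ q * dist (u n) a) :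
    Tendsto u atTop (𝓝 a) := by
  have hgeom : ∀ n, dist (u n) a ≤ dist (u 0) a * q ^ n := by
    intro n
    induction n with
    | zero => simp
    | succ n ih =>
      calc dist (u (n + 1)) a ≤ q * dist (u n) a := h n
        _ ≤ q * (dist (u 0) a * q ^ n) := by gcongr
        _ = dist (u 0) a * q ^ (n + 1) := by ring
  refine tendsto_iff_dist_tendsto_zero.2 (squeeze_zero (fun _ ↦ dist_nonneg) hgeom ?_)
  simpa using (tendsto_pow_atTop_nhds_zero_of_lt_one hq₀ hq₁).const_mul (dist (u 0) a)

noncomputable def riccatiMap (E c x : ℝ) : ℝ := E + c - c ^ 2 / (x + c)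

noncomputable def riccatiFixedPoint (E c : ℝ) : ℝ :=
  E / 2 + (1 / 2) * Real.sqrt (E ^ 2 + 4 * c * E)

section Riccati

variable {E c : ℝ}

theorem le_riccatiMap (hc : 0 ≤ c) {x : ℝ} (hx : 0 ≤ x) : E ≤ riccatiMap E c x := by
  have : c ^ 2 / (x + c) ≤ c := div_le_of_le_mul₀ (by positivity) hc (by nlinarith)
  unfold riccatiMap
  linarith

theorem le_riccatiFixedPoint (hE : 0 ≤ E) (hc : 0 ≤ c) : E ≤ riccatiFixedPoint E c := by
  have : E ≤ Real.sqrt (E ^ 2 + 4 * c * E) := Real.le_sqrt_of_sq_le (by nlinarith)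
  unfold riccatiFixedPoint
  linarith

theorem riccatiMap_riccatiFixedPoint (hE : 0 < E) (hc : 0 ≤ c) :
    riccatiMap E c (riccatiFixedPoint E c) = riccatiFixedPoint E c := by
  have hpos : 0 < riccatiFixedPoint E c + c := by
    linarith [le_riccatiFixedPoint hE.le hc]
  have hsq : Real.sqrt (E ^ 2 + 4 * c * E) ^ 2 = E ^ 2 + 4 * c * E :=
    Real.sq_sqrt (by positivity)
  unfold riccatiMap
  rw [sub_eq_iff_eq_add, ← sub_eq_iff_eq_add', eq_div_iff hpos.ne']
  unfold riccatiFixedPoint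
  linear_combination (-1 / 4 : ℝ) * hsq

theorem abs_riccatiMap_sub_le (hEc : 0 < E + c) {x y : ℝ} (hx : E ≤ x) (hy : E ≤ y) :
    |riccatiMap E c x - riccatiMap E c y| ≤ (c / (E + c)) ^ 2 * |x - y| := by
  have hx' : 0 < x + c := by linarith
  have hy' : 0 < y + c := by linarith
  have hdiff : riccatiMap E c x - riccatiMap E c y = c ^ 2 * (x - y) / ((x + c) * (y + c)) := by
    unfold riccatiMap
    field_simp
    ring
  have hden : (E + c) ^ 2 ≤ (x + c) * (y + c) := by
    rw [sq]
    gcongr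
  rw [hdiff, abs_div, abs_mul, abs_of_nonneg (sq_nonneg c), abs_of_pos (mul_pos hx' hy'),
    div_pow, div_mul_eq_mul_div]
  gcongr

end Riccati

/-- Any nonnegative solution of the Riccati difference equation
`J_{n+1} = E + c − c²/(J_n + c)` converges to the stationary solution
`J* = E/2 + (1/2)√(E² + 4cE)`, independently of the starting condition. -/
theorem riccati_recursion_tendsto_stationary (E c : ℝ) (hE : 0 < E) (hc : 0 < c)
    (J : ℕ → ℝ) (hJpos : ∀ n, 0 ≤ J n)
    (hJrec : ∀ n, J (n + 1) = E + c - c ^ 2 / (J n + c)) :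
    Tendsto J atTop (nhds (E / 2 + (1 / 2) * Real.sqrt (E ^ 2 + 4 * c * E))) := by
  change Tendsto J atTop (𝓝 (riccatiFixedPoint E c))
  have hJmap : ∀ n, J (n + 1) = riccatiMap E c (J n) := hJrec
  have hJE : ∀ n, E ≤ J (n + 1) := fun n ↦ (hJmap n).trans_ge (le_riccatiMap hc.le (hJpos n))
  have hq₁ : (c / (E + c)) ^ 2 < 1 :=
    pow_lt_one₀ (by positivity) ((div_lt_one (by positivity)).2 (by linarith)) two_ne_zero
  refine (tendsto_add_atTop_iff_nat 1).1 <|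
    tendsto_of_dist_succ_le_mul (by positivity) hq₁ fun n ↦ ?_
  rw [Real.dist_eq, Real.dist_eq, hJmap (n + 1)]
  conv_lhs => rw [← riccatiMap_riccatiFixedPoint hE hc.le]
  exact abs_riccatiMap_sub_le (add_pos hE hc) (hJE n) (le_riccatiFixedPoint hE.le hc.le)
end

section
/- Let α > 0 and β be real numbers. Then lim_{P → ∞} (1/log P) · (1/2) log( P^α − (1 − e^{−P^β/2}) / (1 − e^{−P^{β−α}/2}) ) = (1/2) min(α + β, α), where the limit is over real P → ∞ and the argument of the outer logarithm is positive for all P > 1. -/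
/-!
Write `L = P^α` and `y = P^(β-α)/2`, so that the loss term is `L - f(L y)/f(y)` with
`f(t) = 1 - e^{-t}`. It is positive by Bernoulli's inequality for `e^{-y L} = (e^{-y})^L`.
Second-order Taylor bounds for `f` show that it is of exact order `L²y ≍ P^(α+β)` when
`L y = P^β/2` stays bounded (`β ≤ 0`), and the crude bounds `f ≤ 1`, `f(y) ≥ y/(1+y)` show
that it is of exact order `L = P^α` when `L y → ∞` (`β > 0`). A function squeezed between two
multiples of `P^m` has `log f(P) / log P → m`.
-/

open Filter Real Topology

lemma exp_neg_le_quadratic {t : ℝ} (ht : |t| ≤ 1) : exp (-t) ≤ 1 - t + t ^ 2 := by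
  have h := abs_exp_sub_one_sub_id_le (x := -t) (by rwa [abs_neg])
  linarith [(abs_le.mp h).2]

lemma cubic_le_exp_neg {t : ℝ} (ht : |t| ≤ 1) :
    1 - t + t ^ 2 / 2 - 2 * |t| ^ 3 / 9 ≤ exp (-t) := by
  have h := Real.exp_bound (x := -t) (n := 3) (by rwa [abs_neg]) (by norm_num)
  simp only [Finset.sum_range_succ, Finset.sum_range_zero, abs_neg] at h
  norm_num [Nat.factorial] at h
  linarith [(abs_le.mp h).1]

lemma div_one_add_le_one_sub_exp_neg {t : ℝ} (ht : -1 < t) : t / (1 + t) ≤ 1 - exp (-t) := by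
  have h1t : 0 < 1 + t := by linarith
  have hexp : exp (-t) ≤ 1 / (1 + t) := by
    rw [exp_neg, inv_eq_one_div]
    exact one_div_le_one_div_of_le h1t (by linarith [add_one_le_exp t])
  have hsplit : t / (1 + t) = 1 - 1 / (1 + t) := by field_simp; ring
  linarith

/-- The coherent-combining loss `L - (1 - e^{-σ²/2})/(1 - e^{-σ²/(2L)})`, with `y = σ²/(2L)`. -/
noncomputable def combiningLoss (L y : ℝ) : ℝ :=
  L - (1 - exp (-(L * y))) / (1 - exp (-y))

section CombiningLoss

variable {L y : ℝ}

lemma combiningLoss_pos (hL : 1 < L) (hy : 0 < y) : 0 < combiningLoss L y := by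
  have hey : exp (-y) < 1 := exp_lt_one_iff.mpr (by linarith)
  have hbern := one_add_mul_self_lt_rpow_one_add (s := exp (-y) - 1)
    (by linarith [exp_pos (-y)]) (by linarith) hL
  rw [add_sub_cancel, ← exp_mul, neg_mul, mul_comm y L] at hbern
  rw [combiningLoss, sub_pos, div_lt_iff₀ (by linarith)]
  linarith

lemma combiningLoss_le_self (hy : 0 < y) (hLy : 0 ≤ L * y) : combiningLoss L y ≤ L := by
  have hfx : 0 ≤ 1 - exp (-(L * y)) := by linarith [exp_le_one_iff.mpr (neg_nonpos.mpr hLy)]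
  have hfy : 0 < 1 - exp (-y) := by linarith [exp_lt_one_iff.mpr (neg_lt_zero.mpr hy)]
  rw [combiningLoss]
  linarith [div_nonneg hfx hfy.le]

lemma combiningLoss_le_two_mul_sq_mul (hL : 1 ≤ L) (hy : 0 < y) (hLy : L * y ≤ 1) :
    combiningLoss L y ≤ 2 * (L ^ 2 * y) := by
  have hy1 : y ≤ 1 := by nlinarith
  have hfy : y / 2 ≤ 1 - exp (-y) := by
    have := div_one_add_le_one_sub_exp_neg (t := y) (by linarith)
    have : y / 2 ≤ y / (1 + y) := div_le_div_of_nonneg_left hy.le (by linarith) (by linarith)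
    linarith
  have hx := exp_neg_le_quadratic (t := L * y) (abs_le.mpr ⟨by nlinarith, hLy⟩)
  have hLfy : L * (1 - exp (-y)) ≤ L * y := by
    nlinarith [one_sub_le_exp_neg y]
  rw [combiningLoss, sub_le_iff_le_add, ← sub_le_iff_le_add', le_div_iff₀ (by linarith)]
  nlinarith

lemma sq_mul_div_six_le_combiningLoss (hL : 6 ≤ L) (hy : 0 < y) (hLy : L * y ≤ 1 / 2) :
    L ^ 2 * y / 6 ≤ combiningLoss L y := by
  set x := L * y with hx_def
  have hx : 0 < x := by positivity
  have hy1 : y ≤ 1 := by nlinarith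
  have hfy_pos : 0 < 1 - exp (-y) := by linarith [exp_lt_one_iff.mpr (neg_lt_zero.mpr hy)]
  have hfy_le : 1 - exp (-y) ≤ y := by linarith [one_sub_le_exp_neg y]
  have hfy_ge : y - y ^ 2 ≤ 1 - exp (-y) := by
    linarith [exp_neg_le_quadratic (abs_le.mpr ⟨by linarith, hy1⟩)]
  have hfx_le : 1 - exp (-x) ≤ x - x ^ 2 / 2 + 2 * x ^ 3 / 9 := by
    have := cubic_le_exp_neg (t := x) (abs_le.mpr ⟨by linarith, by linarith⟩)
    rw [abs_of_pos hx] at this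
    linarith
  -- `L f(y) - f(x) ≥ x²/2 - 2x³/9 - L y² ≥ x²/2 - x²/9 - x²/6`
  have hnum : x ^ 2 / 6 ≤ L * (1 - exp (-y)) - (1 - exp (-x)) := by
    have hxy : L * y ^ 2 ≤ x ^ 2 / 6 := by
      rw [hx_def]; nlinarith [mul_le_mul_of_nonneg_right hL (by positivity : 0 ≤ L * y ^ 2)]
    have hx3 : x ^ 3 ≤ x ^ 2 / 2 := by nlinarith
    nlinarith
  have hratio : (1 - exp (-x)) / (1 - exp (-y)) ≤ L - x ^ 2 / 6 / y := by
    rw [div_le_iff₀ hfy_pos]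
    have : x ^ 2 / 6 / y * (1 - exp (-y)) ≤ x ^ 2 / 6 := by
      rw [div_mul_eq_mul_div, div_le_iff₀ hy]; nlinarith
    nlinarith
  have hsq : x ^ 2 / 6 / y = L ^ 2 * y / 6 := by rw [hx_def]; field_simp
  rw [combiningLoss, ← hx_def]
  linarith

lemma div_three_le_combiningLoss (hL : 3 ≤ L) (hy : 0 < y) (hLy : 3 ≤ L * y) :
    L / 3 ≤ combiningLoss L y := by
  have hfy := div_one_add_le_one_sub_exp_neg (t := y) (by linarith)
  have hfy_pos : 0 < y / (1 + y) := by positivity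
  -- `f(L y) ≤ 1` and `1 / f(y) ≤ 1 + 1/y ≤ 1 + L/3`
  have hratio : (1 - exp (-(L * y))) / (1 - exp (-y)) ≤ 2 * L / 3 := by
    rw [div_le_iff₀ (hfy_pos.trans_le hfy)]
    have hone : 1 ≤ 2 * L / 3 * (y / (1 + y)) := by
      rw [mul_div_assoc', le_div_iff₀ (by linarith)]; nlinarith
    nlinarith [exp_pos (-(L * y))]
  rw [combiningLoss]
  linarith

end CombiningLoss

lemma tendsto_log_div_log_of_rpow_bounds {f : ℝ → ℝ} {m c₁ c₂ : ℝ} (hc₁ : 0 < c₁)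
    (hf : ∀ᶠ P in atTop, c₁ * P ^ m ≤ f P ∧ f P ≤ c₂ * P ^ m) :
    Tendsto (fun P => log (f P) / log P) atTop (𝓝 m) := by
  have hlim : ∀ c : ℝ, Tendsto (fun P => m + log c / log P) atTop (𝓝 m) := fun c => by
    simpa using tendsto_const_nhds.add (tendsto_const_nhds.div_atTop tendsto_log_atTop)
  have hlog_bounds : ∀ᶠ P in atTop,
      m + log c₁ / log P ≤ log (f P) / log P ∧ log (f P) / log P ≤ m + log c₂ / log P := by
    filter_upwards [hf, eventually_gt_atTop 1] with P ⟨hlo, hhi⟩ hP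
    have hlogP : 0 < log P := log_pos hP
    have hlow : 0 < c₁ * P ^ m := by positivity
    have hsplit : ∀ c, 0 < c → log (c * P ^ m) / log P = m + log c / log P := fun c hc => by
      rw [log_mul hc.ne' (by positivity), log_rpow (by linarith)]
      field_simp
      ring
    rw [← hsplit c₁ hc₁, ← hsplit c₂ (pos_of_mul_pos_left (hlow.trans_le (hlo.trans hhi))
      (by positivity))]
    exact ⟨div_le_div_of_nonneg_right (log_le_log hlow hlo) hlogP.le,
      div_le_div_of_nonneg_right (log_le_log (hlow.trans_le hlo) hhi) hlogP.le⟩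
  exact tendsto_of_tendsto_of_tendsto_of_le_of_le' (hlim c₁) (hlim c₂)
    (hlog_bounds.mono fun _ h => h.1) (hlog_bounds.mono fun _ h => h.2)

lemma combiningLoss_rpow {P : ℝ} (hP : 0 < P) (α β : ℝ) :
    P ^ α - (1 - exp (-(P ^ β) / 2)) / (1 - exp (-(P ^ (β - α)) / 2)) =
      combiningLoss (P ^ α) (P ^ (β - α) / 2) := by
  rw [combiningLoss, ← mul_div_assoc, ← rpow_add hP, add_sub_cancel, neg_div, neg_div]

section Asymptotics

variable {α β : ℝ}

lemma eventually_combiningLoss_rpow_bounds_of_nonpos (hα : 0 < α) (hβ : β ≤ 0) :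
    ∀ᶠ P in atTop, 1 / 12 * P ^ (α + β) ≤ combiningLoss (P ^ α) (P ^ (β - α) / 2) ∧
      combiningLoss (P ^ α) (P ^ (β - α) / 2) ≤ 1 * P ^ (α + β) := by
  filter_upwards [(tendsto_rpow_atTop hα).eventually_ge_atTop 6, eventually_gt_atTop 1]
    with P hL hP
  have hP0 : 0 < P := by linarith
  have hLy : P ^ α * (P ^ (β - α) / 2) = P ^ β / 2 := by
    rw [← mul_div_assoc, ← rpow_add hP0, add_sub_cancel]
  have hsq : (P ^ α) ^ 2 * (P ^ (β - α) / 2) = P ^ (α + β) / 2 := by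
    rw [sq, mul_assoc, hLy, ← mul_div_assoc, ← rpow_add hP0]
  have hPβ : P ^ β ≤ 1 := rpow_le_one_of_one_le_of_nonpos hP.le hβ
  have hy : 0 < P ^ (β - α) / 2 := by positivity
  constructor
  · have := sq_mul_div_six_le_combiningLoss hL hy (by linarith)
    linarith
  · have := combiningLoss_le_two_mul_sq_mul (L := P ^ α) (by linarith) hy (by linarith)
    linarith

lemma eventually_combiningLoss_rpow_bounds_of_pos (hα : 0 < α) (hβ : 0 < β) :
    ∀ᶠ P in atTop, 1 / 3 * P ^ α ≤ combiningLoss (P ^ α) (P ^ (β - α) / 2) ∧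
      combiningLoss (P ^ α) (P ^ (β - α) / 2) ≤ 1 * P ^ α := by
  filter_upwards [(tendsto_rpow_atTop hα).eventually_ge_atTop 3,
    (tendsto_rpow_atTop hβ).eventually_ge_atTop 6, eventually_gt_atTop 0] with P hL hPβ hP
  have hLy : P ^ α * (P ^ (β - α) / 2) = P ^ β / 2 := by
    rw [← mul_div_assoc, ← rpow_add hP, add_sub_cancel]
  have hy : 0 < P ^ (β - α) / 2 := by positivity
  constructor
  · linarith [div_three_le_combiningLoss hL hy (by linarith)]
  · linarith [combiningLoss_le_self (L := P ^ α) hy (by linarith)]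

end Asymptotics

/-- GDoF asymptotics of the coherent-combining loss term: with oversampling factor
`L = P^α` and frequency noise variance `σ² = P^β`, the argument
`P^α − (1 − e^{−P^β/2})/(1 − e^{−P^{β−α}/2})` is positive for all `P > 1`, and
`(1/log P)·(1/2) log(·)` tends to `(1/2) min(α + β, α)` as `P → ∞`. -/
theorem gdof_coherent_loss_term (α β : ℝ) (hα : 0 < α) :
    (∀ P : ℝ, 1 < P →
      0 < P ^ α - (1 - Real.exp (-(P ^ β) / 2)) / (1 - Real.exp (-(P ^ (β - α)) / 2))) ∧
    Tendsto (fun P : ℝ => (1 / Real.log P) *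
        ((1 / 2) * Real.log
          (P ^ α - (1 - Real.exp (-(P ^ β) / 2)) / (1 - Real.exp (-(P ^ (β - α)) / 2)))))
      atTop (nhds ((1 / 2) * min (α + β) α)) := by
  refine ⟨fun P hP => ?_, ?_⟩
  · rw [combiningLoss_rpow (by linarith)]
    exact combiningLoss_pos (one_lt_rpow hP hα) (by positivity)
  have hlim : Tendsto (fun P => log (combiningLoss (P ^ α) (P ^ (β - α) / 2)) / log P) atTop
      (𝓝 (min (α + β) α)) := by
    rcases le_or_gt β 0 with hβ | hβ
    · rw [min_eq_left (by linarith)]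
      exact tendsto_log_div_log_of_rpow_bounds (by norm_num)
        (eventually_combiningLoss_rpow_bounds_of_nonpos hα hβ)
    · rw [min_eq_right (by linarith)]
      exact tendsto_log_div_log_of_rpow_bounds (by norm_num)
        (eventually_combiningLoss_rpow_bounds_of_pos hα hβ)
  refine (hlim.const_mul (1 / 2)).congr' ?_
  filter_upwards [eventually_gt_atTop 0] with P hP
  rw [combiningLoss_rpow hP]
  ring
end

section
/- Let α ≥ 0 and β be real numbers. Then lim_{P → ∞} (1/log P) · (1/2) log( 6π² P^α ( (1 + (P^α − 1) e^{−P^β/2}) / P^α )^{−3/2} ) equals α/2 + 3α/4 if β > 0, and equals α/2 if β ≤ 0, where the limit is over real P → ∞. -/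
open Filter Real
open scoped Topology

/-!
Write `L = P ^ α` and `R = (1 + (L - 1) e^{-P^β/2}) / L`. Since
`log (6π² L R^{-3/2}) = log (6π²) + α log P - (3/2) log R`, everything reduces to the limit
of `log R / log P`. If `β > 0`, then `L e^{-P^β/2} → 0` and `L R = 1 + (L - 1) e^{-P^β/2}`
lies in `[1, 1 + L e^{-P^β/2}]`, so `log R = -α log P + O(1)`. If `β ≤ 0`, then `P^β ≤ 1`
and `R` is a convex combination of `1` and `e^{-P^β/2} ≥ e^{-1/2}`, so `log R = O(1)`.
-/

theorem tendsto_div_log_atTop_zero_of_abs_le {f : ℝ → ℝ} {C : ℝ}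
    (hf : ∀ᶠ P in atTop, |f P| ≤ C) : Tendsto (fun P => f P / log P) atTop (𝓝 0) := by
  have hinv : Tendsto (fun P => (log P)⁻¹) atTop (𝓝 0) :=
    tendsto_inv_atTop_zero.comp tendsto_log_atTop
  have hbdd : IsBoundedUnder (· ≤ ·) atTop ((‖·‖) ∘ f) :=
    isBoundedUnder_of_eventually_le (a := C) (by simpa only [Function.comp_def, norm_eq_abs])
  simpa only [div_eq_inv_mul] using hinv.zero_mul_isBoundedUnder_le hbdd

theorem tendsto_log_mul_rpow_mul_rpow_div_log {Q : ℝ → ℝ} {c α r l : ℝ} (hc : 0 < c)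
    (hQ : ∀ᶠ P in atTop, 0 < Q P) (hl : Tendsto (fun P => log (Q P) / log P) atTop (𝓝 l)) :
    Tendsto (fun P => log (c * P ^ α * Q P ^ r) / log P) atTop (𝓝 (α + r * l)) := by
  have hconst : Tendsto (fun P => log c / log P) atTop (𝓝 0) :=
    tendsto_div_log_atTop_zero_of_abs_le (C := |log c|) (Eventually.of_forall fun _ => le_rfl)
  have hsum := (hconst.add_const α).add (hl.const_mul r)
  rw [zero_add] at hsum
  refine hsum.congr' ?_
  filter_upwards [hQ, eventually_gt_atTop 1] with P hQP hP
  have hP0 : 0 < P := by linarith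
  rw [log_mul (mul_pos hc (rpow_pos_of_pos hP0 α)).ne' (rpow_pos_of_pos hQP r).ne',
    log_mul hc.ne' (rpow_pos_of_pos hP0 α).ne', log_rpow hP0, log_rpow hQP]
  field_simp [(log_pos hP).ne']

noncomputable def phaseRatio (L s : ℝ) : ℝ := (1 + (L - 1) * exp (-s / 2)) / L

section phaseRatio

variable {L s : ℝ}

theorem exp_neg_half_le_phaseRatio (hL : 0 < L) (hs : 0 ≤ s) :
    exp (-s / 2) ≤ phaseRatio L s := by
  have he : exp (-s / 2) ≤ 1 := exp_le_one_iff.2 (by linarith)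
  rw [phaseRatio, le_div_iff₀ hL]
  linarith

theorem phaseRatio_pos (hL : 0 < L) (hs : 0 ≤ s) : 0 < phaseRatio L s :=
  (exp_pos _).trans_le (exp_neg_half_le_phaseRatio hL hs)

theorem phaseRatio_le_one (hL : 1 ≤ L) (hs : 0 ≤ s) : phaseRatio L s ≤ 1 := by
  have he : exp (-s / 2) ≤ 1 := exp_le_one_iff.2 (by linarith)
  rw [phaseRatio, div_le_one (by linarith)]
  nlinarith

theorem abs_log_phaseRatio_le (hL : 1 ≤ L) (hs : 0 ≤ s) : |log (phaseRatio L s)| ≤ s / 2 := by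
  have hL0 : 0 < L := by linarith
  have hR := phaseRatio_pos hL0 hs
  have hlower : -s / 2 ≤ log (phaseRatio L s) := by
    simpa only [log_exp] using log_le_log (exp_pos _) (exp_neg_half_le_phaseRatio hL0 hs)
  have hupper : log (phaseRatio L s) ≤ 0 := log_nonpos hR.le (phaseRatio_le_one hL hs)
  rw [abs_le]
  constructor <;> linarith

theorem abs_log_phaseRatio_add_log_le (hL : 1 ≤ L) :
    |log (phaseRatio L s) + log L| ≤ L * exp (-s / 2) := by
  have he := exp_pos (-s / 2)
  have hgain : 0 ≤ (L - 1) * exp (-s / 2) := mul_nonneg (by linarith) he.le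
  have hsplit : log (phaseRatio L s) + log L = log (1 + (L - 1) * exp (-s / 2)) := by
    rw [phaseRatio, log_div (by linarith) (by linarith), sub_add_cancel]
  rw [hsplit, abs_of_nonneg (log_nonneg (by linarith))]
  linarith [log_le_sub_one_of_pos (x := 1 + (L - 1) * exp (-s / 2)) (by linarith)]

end phaseRatio

theorem tendsto_rpow_mul_exp_neg_rpow_div_two (α : ℝ) {β : ℝ} (hβ : 0 < β) :
    Tendsto (fun P => P ^ α * exp (-(P ^ β) / 2)) atTop (𝓝 0) := by
  refine ((tendsto_rpow_mul_exp_neg_mul_atTop_nhds_zero (α / β) (1 / 2) (by norm_num)).comp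
    (tendsto_rpow_atTop hβ)).congr' ?_
  filter_upwards [eventually_gt_atTop 0] with P hP
  rw [Function.comp_apply, ← rpow_mul hP.le, mul_div_cancel₀ α hβ.ne']
  ring_nf

theorem tendsto_log_phaseRatio_div_log_of_pos {α β : ℝ} (hα : 0 ≤ α) (hβ : 0 < β) :
    Tendsto (fun P => log (phaseRatio (P ^ α) (P ^ β)) / log P) atTop (𝓝 (-α)) := by
  have hbound : ∀ᶠ P in atTop, |log (phaseRatio (P ^ α) (P ^ β)) + log (P ^ α)| ≤ 1 := by
    filter_upwards [(tendsto_rpow_mul_exp_neg_rpow_div_two α hβ).eventually_le_const one_pos,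
      eventually_ge_atTop 1] with P hsmall hP
    exact (abs_log_phaseRatio_add_log_le (one_le_rpow hP hα)).trans hsmall
  have hlim := (tendsto_div_log_atTop_zero_of_abs_le hbound).sub_const α
  rw [zero_sub] at hlim
  refine hlim.congr' ?_
  filter_upwards [eventually_gt_atTop 1] with P hP
  rw [log_rpow (by linarith)]
  field_simp [(log_pos hP).ne']
  ring

theorem tendsto_log_phaseRatio_div_log_of_nonpos {α β : ℝ} (hα : 0 ≤ α) (hβ : β ≤ 0) :
    Tendsto (fun P => log (phaseRatio (P ^ α) (P ^ β)) / log P) atTop (𝓝 0) := by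
  refine tendsto_div_log_atTop_zero_of_abs_le (C := 1 / 2) ?_
  filter_upwards [eventually_ge_atTop 1] with P hP
  calc |log (phaseRatio (P ^ α) (P ^ β))| ≤ P ^ β / 2 :=
        abs_log_phaseRatio_le (one_le_rpow hP hα) (by positivity)
    _ ≤ 1 / 2 := by linarith [rpow_le_one_of_one_le_of_nonpos hP hβ]

/-- GDoF asymptotics of the term `6π² L ((1 + (L−1)e^{−σ²/2})/L)^{−3/2}` of the
phase-channel rate lower bound, with `L = P^α` and `σ² = P^β`: the normalized logarithm
tends to `α/2 + 3α/4` if `β > 0` and to `α/2` if `β ≤ 0`. -/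
theorem gdof_phase_residual_term (α β : ℝ) (hα : 0 ≤ α) :
    (0 < β →
      Tendsto (fun P : ℝ => (1 / Real.log P) *
          ((1 / 2) * Real.log (6 * Real.pi ^ 2 * P ^ α *
            ((1 + (P ^ α - 1) * Real.exp (-(P ^ β) / 2)) / P ^ α) ^ (-(3 : ℝ) / 2))))
        atTop (nhds (α / 2 + 3 * α / 4))) ∧
    (β ≤ 0 →
      Tendsto (fun P : ℝ => (1 / Real.log P) *
          ((1 / 2) * Real.log (6 * Real.pi ^ 2 * P ^ α *
            ((1 + (P ^ α - 1) * Real.exp (-(P ^ β) / 2)) / P ^ α) ^ (-(3 : ℝ) / 2))))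
        atTop (nhds (α / 2))) := by
  have hratio : ∀ᶠ P in atTop, 0 < phaseRatio (P ^ α) (P ^ β) := by
    filter_upwards [eventually_gt_atTop 0] with P hP
    exact phaseRatio_pos (rpow_pos_of_pos hP α) (rpow_pos_of_pos hP β).le
  have reduce : ∀ l, Tendsto (fun P => log (phaseRatio (P ^ α) (P ^ β)) / log P) atTop (𝓝 l) →
      Tendsto (fun P : ℝ => (1 / log P) * ((1 / 2) * log (6 * π ^ 2 * P ^ α *
        ((1 + (P ^ α - 1) * exp (-(P ^ β) / 2)) / P ^ α) ^ (-(3 : ℝ) / 2))))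
        atTop (𝓝 (α / 2 - 3 / 4 * l)) := fun l hl => by
    convert (tendsto_log_mul_rpow_mul_rpow_div_log (c := 6 * π ^ 2) (r := -(3 : ℝ) / 2)
      (by positivity) hratio hl).const_mul (1 / 2) using 1
    · funext P
      rw [phaseRatio]
      ring
    · ring_nf
  refine ⟨fun hβ => ?_, fun hβ => ?_⟩
  · convert reduce _ (tendsto_log_phaseRatio_div_log_of_pos hα hβ) using 2
    ring
  · convert reduce _ (tendsto_log_phaseRatio_div_log_of_nonpos hα hβ) using 2
    ring
end

section
/- Let α ≥ 0 and β be real numbers. Then lim_{P → ∞} (1/log P) · [ 2 log( (1 + (P^α − 1) e^{−P^β/2}) / P^α ) + log(P + 2) ] equals 1 − 2α if β > 0, and equals 1 if β ≤ 0, where the limit is over real P → ∞. -/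
open Filter Real Asymptotics Topology

/-!
With `N = 1 + (L - 1) e^{-σ²/2}`, the normalized quantity is
`(2 log N - 2α log P + log (P + 2)) / log P`, and `log (P + 2) - log P → 0`.
If `β > 0` then `L e^{-σ²/2} = P^α e^{-P^β/2} → 0`, so `N → 1` and `log N = O(1)`.
If `β ≤ 0` then `e^{-σ²/2} ∈ [e^{-1/2}, 1]` for `P ≥ 1`, so `e^{-1/2} L ≤ N ≤ L` and
`log N = α log P + O(1)`. An `O(1)` term vanishes after division by `log P`.
-/

theorem tendsto_div_log_of_isBigO_one {f : ℝ → ℝ} {c : ℝ}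
    (h : (fun x => f x - c * log x) =O[atTop] fun _ => (1 : ℝ)) :
    Tendsto (fun x => f x / log x) atTop (𝓝 c) := by
  have hdiff : Tendsto (fun x => (f x - c * log x) / log x) atTop (𝓝 0) :=
    (h.trans_isLittleO isLittleO_const_log_atTop).tendsto_div_nhds_zero
  refine (zero_add c ▸ hdiff.add_const c).congr' ?_
  filter_upwards [eventually_gt_atTop 1] with x hx
  have := (log_pos hx).ne'
  field_simp
  ring

theorem tendsto_rpow_mul_exp_neg_mul_rpow_atTop_nhds_zero (s : ℝ) {b β : ℝ} (hb : 0 < b)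
    (hβ : 0 < β) : Tendsto (fun x : ℝ => x ^ s * exp (-b * x ^ β)) atTop (𝓝 0) := by
  refine ((tendsto_rpow_mul_exp_neg_mul_atTop_nhds_zero (s / β) b hb).comp
    (tendsto_rpow_atTop hβ)).congr' ?_
  filter_upwards [eventually_ge_atTop 0] with x hx
  rw [Function.comp_apply, ← rpow_mul hx, mul_div_cancel₀ s hβ.ne']

section CombiningBounds

variable {L t : ℝ}

theorem one_add_sub_one_mul_pos (hL : 0 < L) (ht₀ : 0 < t) (ht₁ : t ≤ 1) :
    0 < 1 + (L - 1) * t := by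
  nlinarith

theorem one_add_sub_one_mul_le (hL : 1 ≤ L) (ht : t ≤ 1) : 1 + (L - 1) * t ≤ L := by
  nlinarith

theorem mul_le_one_add_sub_one_mul (ht : t ≤ 1) : t * L ≤ 1 + (L - 1) * t := by
  linarith

end CombiningBounds

/-- The numerator `1 + (L - 1) e^{-σ²/2}` with `L = P^α` and `σ² = P^β`. -/
noncomputable def combiningGain (α β P : ℝ) : ℝ :=
  1 + (P ^ α - 1) * exp (-(P ^ β) / 2)

section CombiningGain

variable {α β P : ℝ}

theorem exp_neg_rpow_div_two_le_one (hP : 0 ≤ P) : exp (-(P ^ β) / 2) ≤ 1 :=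
  exp_le_one_iff.mpr (by linarith [rpow_nonneg hP β])

theorem combiningGain_pos (hP : 0 < P) : 0 < combiningGain α β P :=
  one_add_sub_one_mul_pos (rpow_pos_of_pos hP α) (exp_pos _) (exp_neg_rpow_div_two_le_one hP.le)

theorem log_combiningGain_div_rpow (hP : 0 < P) :
    log (combiningGain α β P / P ^ α) = log (combiningGain α β P) - α * log P := by
  rw [log_div (combiningGain_pos hP).ne' (rpow_pos_of_pos hP α).ne', log_rpow hP]

theorem tendsto_combiningGain_of_pos (hβ : 0 < β) :
    Tendsto (combiningGain α β) atTop (𝓝 1) := by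
  have hexp : Tendsto (fun P : ℝ => exp (-(P ^ β) / 2)) atTop (𝓝 0) :=
    tendsto_exp_atBot.comp <|
      (tendsto_neg_atTop_atBot.comp (tendsto_rpow_atTop hβ)).atBot_div_const two_pos
  have hmul : Tendsto (fun P : ℝ => P ^ α * exp (-(P ^ β) / 2)) atTop (𝓝 0) := by
    simpa only [neg_mul, one_div, ← neg_div, inv_mul_eq_div] using
      tendsto_rpow_mul_exp_neg_mul_rpow_atTop_nhds_zero α one_half_pos hβ
  have hlim := (hmul.sub hexp).const_add 1
  rw [sub_zero, add_zero] at hlim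
  exact hlim.congr fun P => by rw [combiningGain]; ring

theorem isBigO_log_combiningGain_sub_of_nonpos (hα : 0 ≤ α) (hβ : β ≤ 0) :
    (fun P => log (combiningGain α β P) - α * log P) =O[atTop] fun _ => (1 : ℝ) := by
  refine IsBigO.of_bound (1 / 2) ?_
  filter_upwards [eventually_ge_atTop 1] with P hP
  have hP₀ : 0 < P := by linarith
  have ht : exp (-(P ^ β) / 2) ≤ 1 := exp_neg_rpow_div_two_le_one hP₀.le
  have hupper : log (combiningGain α β P) ≤ α * log P := by
    rw [← log_rpow hP₀]
    exact log_le_log (combiningGain_pos hP₀) (one_add_sub_one_mul_le (one_le_rpow hP hα) ht)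
  have hlower : α * log P - 1 / 2 ≤ log (combiningGain α β P) := by
    have hβ₁ : P ^ β ≤ 1 := rpow_le_one_of_one_le_of_nonpos hP hβ
    calc α * log P - 1 / 2 ≤ log (exp (-(P ^ β) / 2) * P ^ α) := by
          rw [log_mul (exp_pos _).ne' (rpow_pos_of_pos hP₀ α).ne', log_exp, log_rpow hP₀]
          linarith
      _ ≤ log (combiningGain α β P) := log_le_log (by positivity) (mul_le_one_add_sub_one_mul ht)
  rw [norm_one, mul_one, Real.norm_eq_abs, abs_le]
  constructor <;> linarith

theorem tendsto_gdof_of_isBigO {c : ℝ}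
    (h : (fun P => log (combiningGain α β P) - c * log P) =O[atTop] fun _ => (1 : ℝ)) :
    Tendsto (fun P : ℝ => (1 / log P) * (2 * log (combiningGain α β P / P ^ α) + log (P + 2)))
      atTop (𝓝 (2 * c - 2 * α + 1)) := by
  have hsplit : (fun P => 2 * (log (combiningGain α β P) - c * log P) + (log (P + 2) - log P))
      =ᶠ[atTop] fun P => 2 * log (combiningGain α β P / P ^ α) + log (P + 2)
        - (2 * c - 2 * α + 1) * log P := by
    filter_upwards [eventually_gt_atTop 0] with P hP
    rw [log_combiningGain_div_rpow hP]
    ring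
  have hbound := ((h.const_mul_left 2).add
    ((tendsto_log_comp_add_sub_log 2).isBigO_one ℝ)).congr' hsplit EventuallyEq.rfl
  simpa only [one_div_mul_eq_div] using tendsto_div_log_of_isBigO_one hbound

end CombiningGain

/-- GDoF asymptotics of the leading amplitude-channel terms
`2 log((1 + (L−1)e^{−σ²/2})/L) + log(P + 2)` of the coherent-combining lower bound, with
`L = P^α` and `σ² = P^β`: the normalized sum tends to `1 − 2α` if `β > 0` and to `1` if
`β ≤ 0`. -/
theorem gdof_amplitude_leading_term (α β : ℝ) (hα : 0 ≤ α) :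
    (0 < β →
      Tendsto (fun P : ℝ => (1 / Real.log P) *
          (2 * Real.log ((1 + (P ^ α - 1) * Real.exp (-(P ^ β) / 2)) / P ^ α) +
            Real.log (P + 2)))
        atTop (nhds (1 - 2 * α))) ∧
    (β ≤ 0 →
      Tendsto (fun P : ℝ => (1 / Real.log P) *
          (2 * Real.log ((1 + (P ^ α - 1) * Real.exp (-(P ^ β) / 2)) / P ^ α) +
            Real.log (P + 2)))
        atTop (nhds 1)) := by
  constructor
  · intro hβ
    have hlog : (fun P => log (combiningGain α β P) - 0 * log P) =O[atTop] fun _ => (1 : ℝ) := by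
      simpa using ((continuousAt_log one_ne_zero).tendsto.comp
        (tendsto_combiningGain_of_pos hβ)).isBigO_one ℝ
    have hlim := tendsto_gdof_of_isBigO hlog
    rw [mul_zero, zero_sub, neg_add_eq_sub] at hlim
    exact hlim
  · intro hβ
    have hlim := tendsto_gdof_of_isBigO (isBigO_log_combiningGain_sub_of_nonpos hα hβ)
    rw [sub_self, zero_add] at hlim
    exact hlim
end
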